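/- Let P and Q be distributions on X × Y satisfying the covariate shift condition, with importance weight w*(x) = dQ_X/dP_X(x) and b ≥ sup_x w*(x). Fix ε ∈ (0,1), δ_C, δ_w ∈ (0,1), m, n ≥ 1, and a measurable score function f with C_τ(x) = {y : f(x,y) ≥ τ}. Let W = W(S_m^X, T_n^X) be a measurable rectangular uncertainty set {w ∈ ℝ^m : w̲_i ≤ w_i ≤ w̄_i} depending on the unlabeled source covariates S_m^X and unlabeled target covariates T_n^X, such that P[(w*(x_1),…,w*(x_m)) ∈ W] ≥ 1 − δ_w over S_m^X ~ P_X^m and T_n^X ~ Q_X^n. Draw S_m ~ P^m (with covariates S_m^X), V ~ Uniform([0,1])^m independently, and T_n^X ~ Q_X^n. Define τ̂ = sup{τ ≥ 0 : max_{w ∈ W} U_RSCP(C_τ, S_m, V, w, b, δ_C) ≤ ε} (τ̂ = 0 if infeasible). Then for any measurable selection rule τ with τ ≤ τ̂, the probability over S_m ~ P^m, V ~ Uniform([0,1])^m, and T_n^X ~ Q_X^n that L_Q(C_τ) ≤ ε is at least 1 − δ_C − δ_w. -/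

import Mathlib

open Finset MeasureTheory ProbabilityTheory
open scoped ProbabilityTheory

/-- The CDF of the Binomial(m, θ) distribution evaluated at `k`. -/
noncomputable def binomCDF (m k : ℕ) (θ : ℝ) : ℝ :=
  ∑ i ∈ Finset.range (k + 1), (m.choose i : ℝ) * θ ^ i * (1 - θ) ^ (m - i)

/-- The Clopper–Pearson upper bound
`θ̄(k; m, δ) := inf({θ ∈ [0,1] : F(k; m, θ) ≤ δ} ∪ {1})`. -/
noncomputable def cpUpper (k m : ℕ) (δ : ℝ) : ℝ :=
  sInf ({θ : ℝ | θ ∈ Set.Icc (0 : ℝ) 1 ∧ binomCDF m k θ ≤ δ} ∪ {1})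

open Classical in
/-- The rejection sampling Clopper–Pearson bound
`U_RSCP(C, S_m, V, w, b, δ) := θ̄(L̄_T(C); |T|, δ)`, with
`T = {(x_i, y_i) : V_i ≤ w_i/b}` and `L̄_T(C) = Σ_{(x,y)∈T} 1[y ∉ C(x)]`. -/
noncomputable def URSCP {X Y : Type*} {m : ℕ} (C : X → Set Y) (S : Fin m → X × Y)
    (V : Fin m → ℝ) (w : Fin m → ℝ) (b : ℝ) (δ : ℝ) : ℝ :=
  cpUpper
    ((Finset.univ.filter fun i => V i ≤ w i / b ∧ (S i).2 ∉ C (S i).1).card)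
    ((Finset.univ.filter fun i : Fin m => V i ≤ w i / b).card) δ

/-- The error `L_Q(C) := Q[(x,y) : y ∉ C(x)]`. -/
noncomputable def predError {X Y : Type*} [MeasurableSpace X] [MeasurableSpace Y]
    (Q : Measure (X × Y)) (C : X → Set Y) : ℝ :=
  (Q {p : X × Y | p.2 ∉ C p.1}).toReal

/-- The prediction set `C_τ(x) = {y ∈ Y : f(x,y) ≥ τ}`. -/
def predSet {X Y : Type*} (f : X × Y → ℝ) (τ : ℝ) : X → Set Y :=
  fun x => {y : Y | τ ≤ f (x, y)}

/-- The uniform distribution on `[0,1]`. -/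
noncomputable def uniform01 : Measure ℝ := volume.restrict (Set.Icc (0 : ℝ) 1)

section AuxLemmas
open Finset

lemma binomCDF_continuous (n k : ℕ) : Continuous (binomCDF n k) := by
  refine continuous_finset_sum _ fun i _ => ?_
  exact ((continuous_const.mul (continuous_pow i)).mul
    (((continuous_const.sub continuous_id).pow _)))

lemma term_nonneg (n i : ℕ) {θ : ℝ} (hθ : θ ∈ Set.Icc (0:ℝ) 1) :
    0 ≤ (n.choose i : ℝ) * θ ^ i * (1 - θ) ^ (n - i) := by
  have h1 : (0:ℝ) ≤ θ := hθ.1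
  have h2 : (0:ℝ) ≤ 1 - θ := by linarith [hθ.2]
  positivity

lemma binomCDF_mono_k (n : ℕ) {k k' : ℕ} (h : k ≤ k') {θ : ℝ} (hθ : θ ∈ Set.Icc (0:ℝ) 1) :
    binomCDF n k θ ≤ binomCDF n k' θ := by
  apply Finset.sum_le_sum_of_subset_of_nonneg
  · exact Finset.range_subset_range.2 (by omega)
  · intro i _ _; exact term_nonneg n i hθ

lemma binomCDF_eq_one (n k : ℕ) (h : n ≤ k) (θ : ℝ) : binomCDF n k θ = 1 := by
  have h1 : binomCDF n k θ = ∑ i ∈ Finset.range (n + 1), (n.choose i : ℝ) * θ ^ i * (1 - θ) ^ (n - i) := by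
    symm
    apply Finset.sum_subset (Finset.range_subset_range.2 (by omega))
    intro i hi' hi
    have : n < i := by
      rcases Nat.lt_or_ge n i with h' | h'
      · exact h'
      · exact absurd (Finset.mem_range.2 (by omega)) hi
    simp [Nat.choose_eq_zero_of_lt this]
  rw [h1]
  have := add_pow θ (1 - θ) n
  simp only [add_sub_cancel, one_pow] at this
  have h2 : ∑ i ∈ Finset.range (n+1), (n.choose i : ℝ) * θ ^ i * (1 - θ) ^ (n - i)
      = ∑ m ∈ Finset.range (n+1), θ ^ m * (1 - θ) ^ (n - m) * (n.choose m : ℝ) :=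
    Finset.sum_congr rfl fun i _ => by ring
  rw [h2, ← this]

lemma binomCDF_hasDerivAt (n k : ℕ) (hk : k < n) (θ : ℝ) :
    HasDerivAt (binomCDF n k)
      (-((n : ℝ) * ((n - 1).choose k : ℝ) * θ ^ k * (1 - θ) ^ (n - 1 - k))) θ := by
  have hfun : binomCDF n k = fun t : ℝ =>
      ∑ i ∈ Finset.range (k + 1), (n.choose i : ℝ) * (t ^ i * (1 - t) ^ (n - i)) := by
    funext t; simp [binomCDF, mul_assoc]
  rw [hfun]
  set a : ℕ → ℝ := fun i => if i = 0 then 0 else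
    (n : ℝ) * ((n - 1).choose (i - 1) : ℝ) * θ ^ (i - 1) * (1 - θ) ^ (n - i) with ha
  have hterm : ∀ i ∈ Finset.range (k + 1),
      HasDerivAt (fun t : ℝ => (n.choose i : ℝ) * (t ^ i * (1 - t) ^ (n - i)))
        (a i - a (i + 1)) θ := by
    intro i hi
    have hin : i < n := lt_of_le_of_lt (Nat.lt_succ_iff.1 (Finset.mem_range.1 hi)) hk
    have hq := (hasDerivAt_pow (n - i) (1 - θ)).comp θ ((hasDerivAt_id θ).const_sub (1 : ℝ))
    have h := ((hasDerivAt_pow i θ).mul hq).const_mul ((n.choose i : ℝ))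
    have h' : HasDerivAt (fun t : ℝ => (n.choose i : ℝ) * (t ^ i * (1 - t) ^ (n - i)))
        ((n.choose i : ℝ) * ((↑i * θ ^ (i - 1)) * (1 - θ) ^ (n - i)
          + θ ^ i * ((↑(n - i) * (1 - θ) ^ (n - i - 1)) * -1))) θ := by
      exact h
    convert h' using 1
    rcases i with _ | j
    · simp only [ha, if_pos rfl, if_neg (Nat.succ_ne_zero 0), Nat.succ_sub_one,
        Nat.choose_zero_right, Nat.sub_zero]
      push_cast
      ring
    · have c1n : n.choose (j + 1) * (j + 1) = n * ((n - 1).choose j) := by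
        have h2 := Nat.add_one_mul_choose_eq (n - 1) j
        rw [show n - 1 + 1 = n from by omega] at h2
        exact h2.symm
      have c2n : n.choose (j + 1) * (n - (j + 1)) = n * ((n - 1).choose (j + 1)) := by
        have h1 := Nat.choose_succ_right_eq n (j + 1)
        have h2 := Nat.add_one_mul_choose_eq (n - 1) (j + 1)
        rw [show n - 1 + 1 = n from by omega] at h2
        exact h1.symm.trans h2.symm
      have c1 : (n.choose (j + 1) : ℝ) * ((j + 1 : ℕ) : ℝ)
          = (n : ℝ) * ((n - 1).choose j : ℝ) := by exact_mod_cast c1n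
      have c2 : (n.choose (j + 1) : ℝ) * ((n - (j + 1) : ℕ) : ℝ)
          = (n : ℝ) * ((n - 1).choose (j + 1) : ℝ) := by exact_mod_cast c2n
      simp only [ha, if_neg (Nat.succ_ne_zero _), Nat.succ_sub_one]
      rw [show n - (j + 1) - 1 = n - (j + 2) from by omega]
      linear_combination (θ ^ (j + 1) * (1 - θ) ^ (n - (j + 2))) * c2
        - (θ ^ j * (1 - θ) ^ (n - (j + 1))) * c1
  have hsum := HasDerivAt.fun_sum hterm
  refine hsum.congr_deriv ?_
  have h1 : ∑ i ∈ Finset.range (k + 1), (a i - a (i + 1)) = -(a (k + 1) - a 0) := by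
    rw [← Finset.sum_range_sub a (k + 1), ← Finset.sum_neg_distrib]
    exact Finset.sum_congr rfl fun i _ => by ring
  have h2 : a (k + 1) = (n : ℝ) * ((n - 1).choose k : ℝ) * θ ^ k * (1 - θ) ^ (n - 1 - k) := by
    simp only [ha, if_neg (Nat.succ_ne_zero _), Nat.succ_sub_one]
    rw [show n - (k + 1) = n - 1 - k from by omega]
  have h0 : a 0 = 0 := by simp [ha]
  rw [h1, h2, h0]
  ring

lemma binomCDF_antitoneOn (n k : ℕ) : AntitoneOn (binomCDF n k) (Set.Icc (0:ℝ) 1) := by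
  rcases le_or_gt n k with h | h
  · intro x hx y hy hxy
    rw [binomCDF_eq_one n k h, binomCDF_eq_one n k h]
  · apply antitoneOn_of_hasDerivWithinAt_nonpos (convex_Icc 0 1)
      (binomCDF_continuous n k).continuousOn
      (fun x _ => (binomCDF_hasDerivAt n k h x).hasDerivWithinAt)
    intro x hx
    rw [interior_Icc] at hx
    have h1 : (0:ℝ) ≤ x := hx.1.le
    have h2 : (0:ℝ) ≤ 1 - x := by linarith [hx.2.le]
    have hp : (0:ℝ) ≤ (n : ℝ) * ((n - 1).choose k : ℝ) * x ^ k * (1 - x) ^ (n - 1 - k) := by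
      positivity
    linarith

lemma cpUpper_union_nonempty (k m : ℕ) (δ : ℝ) :
    ({θ : ℝ | θ ∈ Set.Icc (0 : ℝ) 1 ∧ binomCDF m k θ ≤ δ} ∪ {1}).Nonempty :=
  ⟨1, Set.mem_union_right _ rfl⟩

lemma cpUpper_bddBelow (k m : ℕ) (δ : ℝ) :
    BddBelow ({θ : ℝ | θ ∈ Set.Icc (0 : ℝ) 1 ∧ binomCDF m k θ ≤ δ} ∪ {1}) := by
  refine ⟨0, ?_⟩
  rintro θ (⟨h1, _⟩ | h1)
  · exact h1.1
  · rw [Set.mem_singleton_iff] at h1; rw [h1]; norm_num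

lemma cpUpper_nonneg (k m : ℕ) (δ : ℝ) : 0 ≤ cpUpper k m δ := by
  unfold cpUpper
  apply le_csInf (cpUpper_union_nonempty k m δ)
  rintro θ (⟨h1, _⟩ | h1)
  · exact h1.1
  · rw [Set.mem_singleton_iff] at h1; rw [h1]; norm_num

lemma cpUpper_le_one (k m : ℕ) (δ : ℝ) : cpUpper k m δ ≤ 1 := by
  unfold cpUpper
  exact csInf_le (cpUpper_bddBelow k m δ) (Set.mem_union_right _ rfl)

lemma cpUpper_spec (k m : ℕ) (δ : ℝ) (h : cpUpper k m δ < 1) :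
    binomCDF m k (cpUpper k m δ) ≤ δ := by
  have hset : {θ : ℝ | θ ∈ Set.Icc (0 : ℝ) 1 ∧ binomCDF m k θ ≤ δ}
      = Set.Icc (0:ℝ) 1 ∩ binomCDF m k ⁻¹' Set.Iic δ := rfl
  have hclosed : IsClosed ({θ : ℝ | θ ∈ Set.Icc (0 : ℝ) 1 ∧ binomCDF m k θ ≤ δ} ∪ {1}) := by
    apply IsClosed.union
    · rw [hset]
      exact isClosed_Icc.inter (isClosed_Iic.preimage (binomCDF_continuous m k))
    · exact isClosed_singleton
  have hmem := hclosed.csInf_mem (cpUpper_union_nonempty k m δ) (cpUpper_bddBelow k m δ)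
  rw [show cpUpper k m δ = sInf ({θ : ℝ | θ ∈ Set.Icc (0 : ℝ) 1 ∧ binomCDF m k θ ≤ δ} ∪ {1}) from rfl] at h ⊢
  rcases hmem with hmem | hmem
  · exact hmem.2
  · rw [Set.mem_singleton_iff] at hmem
    exact absurd hmem (ne_of_lt h)

lemma cpUpper_mono (m : ℕ) {k k' : ℕ} (h : k ≤ k') (δ : ℝ) :
    cpUpper k m δ ≤ cpUpper k' m δ := by
  unfold cpUpper
  apply csInf_le_csInf (cpUpper_bddBelow k m δ) (cpUpper_union_nonempty k' m δ)
  rintro θ (⟨h1, h2⟩ | h1)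
  · exact Or.inl ⟨h1, le_trans (binomCDF_mono_k m h h1) h2⟩
  · exact Or.inr h1

lemma binom_tail_le (n : ℕ) {θ δ : ℝ} (hθ : θ ∈ Set.Icc (0:ℝ) 1) (hδ : 0 ≤ δ) :
    ∑ k ∈ (Finset.range (n+1)).filter (fun k => binomCDF n k θ ≤ δ),
      (n.choose k : ℝ) * θ ^ k * (1 - θ) ^ (n - k) ≤ δ := by
  set s := (Finset.range (n+1)).filter (fun k => binomCDF n k θ ≤ δ) with hs
  by_cases hne : s.Nonempty
  · set K := s.max' hne with hK
    have hKmem := s.max'_mem hne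
    have hsub : s ⊆ Finset.range (K+1) :=
      fun k hk => Finset.mem_range.2 (Nat.lt_succ_of_le (s.le_max' k hk))
    calc ∑ k ∈ s, (n.choose k : ℝ) * θ ^ k * (1 - θ) ^ (n - k)
        ≤ ∑ k ∈ Finset.range (K+1), (n.choose k : ℝ) * θ ^ k * (1 - θ) ^ (n - k) :=
          Finset.sum_le_sum_of_subset_of_nonneg hsub (fun i _ _ => term_nonneg n i hθ)
      _ = binomCDF n K θ := rfl
      _ ≤ δ := (Finset.mem_filter.1 hKmem).2
  · rw [Finset.not_nonempty_iff_eq_empty.1 hne]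
    simpa using hδ

-- pattern product decomposition
lemma pattern_prod {m : ℕ} (q : Fin 3 → ℝ) (c : Fin m → Fin 3) :
    ∏ i, q (c i) = q 0 ^ (m - (Finset.univ.filter fun i => c i ≠ 0).card)
      * (q 1 ^ ((Finset.univ.filter fun i => c i ≠ 0).card
          - (Finset.univ.filter fun i => c i = 2).card)
        * q 2 ^ (Finset.univ.filter fun i => c i = 2).card) := by
  have hfib : ∏ j : Fin 3, ∏ i ∈ Finset.univ.filter (fun i => c i = j), q (c i)
      = ∏ i, q (c i) :=
    Finset.prod_fiberwise_of_maps_to (fun i _ => Finset.mem_univ (c i)) _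
  have hinner : ∀ j : Fin 3, ∏ i ∈ Finset.univ.filter (fun i => c i = j), q (c i)
      = q j ^ (Finset.univ.filter fun i => c i = j).card := by
    intro j
    rw [← Finset.prod_const]
    exact Finset.prod_congr rfl fun i hi => by rw [(Finset.mem_filter.1 hi).2]
  have hsplit : (Finset.univ.filter fun i => c i = 1).card
        + (Finset.univ.filter fun i => c i = 2).card
      = (Finset.univ.filter fun i => c i ≠ 0).card := by
    rw [← Finset.card_union_of_disjoint]
    · congr 1
      ext i
      simp only [Finset.mem_union, Finset.mem_filter, Finset.mem_univ, true_and]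
      rcases (show ∀ x : Fin 3, x = 0 ∨ x = 1 ∨ x = 2 by decide) (c i) with h | h | h <;> simp [h]
    · rw [Finset.disjoint_filter]
      intro i _ h1 h2
      rw [h1] at h2
      exact absurd h2 (by decide)
  have hzero : (Finset.univ.filter fun i => c i = 0).card
      = m - (Finset.univ.filter fun i => c i ≠ 0).card := by
    have := Finset.card_filter_add_card_filter_not
      (s := (Finset.univ : Finset (Fin m))) (p := fun i => c i = 0)
    simp only [Finset.card_univ, Fintype.card_fin] at this
    simp only [ne_eq]
    omega
  have h1 : (Finset.univ.filter fun i => c i = 1).card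
      = (Finset.univ.filter fun i => c i ≠ 0).card
        - (Finset.univ.filter fun i => c i = 2).card := by omega
  rw [← hfib, Fin.prod_univ_three, hinner 0, hinner 1, hinner 2, hzero, h1]
  ring

lemma key_comb (m : ℕ) (β θ δ : ℝ) (hβ0 : 0 ≤ β) (hβ1 : β ≤ 1)
    (hθ0 : 0 ≤ θ) (hθ1 : θ ≤ 1) (hδ : 0 ≤ δ) :
    ∑ c ∈ (Finset.univ : Finset (Fin m → Fin 3)).filter
        (fun c => binomCDF (Finset.univ.filter fun i => c i ≠ 0).card
          ((Finset.univ.filter fun i => c i = 2).card) θ ≤ δ),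
      ((1 - β) ^ (m - (Finset.univ.filter fun i => c i ≠ 0).card)
        * ((β * (1 - θ)) ^ ((Finset.univ.filter fun i => c i ≠ 0).card
            - (Finset.univ.filter fun i => c i = 2).card)
          * (β * θ) ^ (Finset.univ.filter fun i => c i = 2).card)) ≤ δ := by
  rw [Finset.sum_filter]
  have hbij : (∑ c : Fin m → Fin 3,
        if binomCDF (Finset.univ.filter fun i => c i ≠ 0).card
            ((Finset.univ.filter fun i => c i = 2).card) θ ≤ δ then
          ((1 - β) ^ (m - (Finset.univ.filter fun i => c i ≠ 0).card)
            * ((β * (1 - θ)) ^ ((Finset.univ.filter fun i => c i ≠ 0).card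
                - (Finset.univ.filter fun i => c i = 2).card)
              * (β * θ) ^ (Finset.univ.filter fun i => c i = 2).card)) else 0)
      = ∑ AB ∈ (Finset.univ : Finset (Finset (Fin m))).sigma (fun A => A.powerset),
          (if binomCDF AB.1.card AB.2.card θ ≤ δ then
            ((1 - β) ^ (m - AB.1.card)
              * ((β * (1 - θ)) ^ (AB.1.card - AB.2.card) * (β * θ) ^ AB.2.card)) else 0) := by
    apply Finset.sum_nbij'
      (i := fun c => (⟨Finset.univ.filter (fun i => c i ≠ 0),
        Finset.univ.filter (fun i => c i = 2)⟩ : Σ _ : Finset (Fin m), Finset (Fin m)))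
      (j := fun AB => fun i => if i ∈ AB.2 then 2 else if i ∈ AB.1 then 1 else 0)
    · intro c _
      rw [Finset.mem_sigma]
      refine ⟨Finset.mem_univ _, ?_⟩
      rw [Finset.mem_powerset]
      intro i hi
      rw [Finset.mem_filter] at hi ⊢
      refine ⟨hi.1, ?_⟩
      rw [hi.2]
      decide
    · intro AB _
      exact Finset.mem_univ _
    · -- left inverse
      intro c _
      funext i
      rcases (show ∀ x : Fin 3, x = 0 ∨ x = 1 ∨ x = 2 by decide) (c i) with h | h | h <;>
        simp [h]
    · -- right inverse
      intro AB hAB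
      rw [Finset.mem_sigma, Finset.mem_powerset] at hAB
      have hsub := hAB.2
      have h1 : Finset.univ.filter
          (fun i => (if i ∈ AB.2 then (2 : Fin 3) else if i ∈ AB.1 then 1 else 0) ≠ 0)
          = AB.1 := by
        ext i
        simp only [Finset.mem_filter, Finset.mem_univ, true_and]
        by_cases hb : i ∈ AB.2
        · simp [hb, hsub hb]
        · by_cases ha : i ∈ AB.1 <;> simp [hb, ha]
      have h2 : Finset.univ.filter
          (fun i => (if i ∈ AB.2 then (2 : Fin 3) else if i ∈ AB.1 then 1 else 0) = 2)
          = AB.2 := by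
        ext i
        simp only [Finset.mem_filter, Finset.mem_univ, true_and]
        by_cases hb : i ∈ AB.2
        · simp [hb]
        · by_cases ha : i ∈ AB.1 <;> simp [hb, ha]
      exact Sigma.ext h1 (heq_of_eq h2)
    · intro c _
      rfl
  rw [hbij, Finset.sum_sigma]
  have hq0 : (0:ℝ) ≤ 1 - β := by linarith
  -- inner bound
  have hinner : ∀ A : Finset (Fin m),
      (∑ B ∈ A.powerset, if binomCDF A.card B.card θ ≤ δ then
        ((1 - β) ^ (m - A.card)
          * ((β * (1 - θ)) ^ (A.card - B.card) * (β * θ) ^ B.card)) else 0)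
      ≤ (1 - β) ^ (m - A.card) * β ^ A.card * δ := by
    intro A
    have hstep : (∑ B ∈ A.powerset, if binomCDF A.card B.card θ ≤ δ then
          ((1 - β) ^ (m - A.card)
            * ((β * (1 - θ)) ^ (A.card - B.card) * (β * θ) ^ B.card)) else 0)
        = ∑ k ∈ Finset.range (A.card + 1), A.card.choose k •
            (if binomCDF A.card k θ ≤ δ then
              ((1 - β) ^ (m - A.card)
                * ((β * (1 - θ)) ^ (A.card - k) * (β * θ) ^ k)) else 0) :=
      Finset.sum_powerset_apply_card
        (fun k => if binomCDF A.card k θ ≤ δ then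
          ((1 - β) ^ (m - A.card) * ((β * (1 - θ)) ^ (A.card - k) * (β * θ) ^ k)) else 0)
    rw [hstep]
    have hterm : ∀ k ∈ Finset.range (A.card + 1),
        A.card.choose k • (if binomCDF A.card k θ ≤ δ then
          ((1 - β) ^ (m - A.card) * ((β * (1 - θ)) ^ (A.card - k) * (β * θ) ^ k)) else 0)
        = (1 - β) ^ (m - A.card) * β ^ A.card *
            (if binomCDF A.card k θ ≤ δ then
              (A.card.choose k : ℝ) * θ ^ k * (1 - θ) ^ (A.card - k) else 0) := by
      intro k hk
      have hkle : k ≤ A.card := Nat.lt_succ_iff.1 (Finset.mem_range.1 hk)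
      rw [nsmul_eq_mul]
      by_cases hcond : binomCDF A.card k θ ≤ δ
      · rw [if_pos hcond, if_pos hcond]
        rw [mul_pow, mul_pow]
        have hβpow : β ^ (A.card - k) * β ^ k = β ^ A.card := by
          rw [← pow_add]
          congr 1
          omega
        calc (A.card.choose k : ℝ) * ((1 - β) ^ (m - A.card)
              * ((β ^ (A.card - k) * (1 - θ) ^ (A.card - k)) * (β ^ k * θ ^ k)))
            = (1 - β) ^ (m - A.card) * (β ^ (A.card - k) * β ^ k)
              * ((A.card.choose k : ℝ) * θ ^ k * (1 - θ) ^ (A.card - k)) := by ring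
          _ = (1 - β) ^ (m - A.card) * β ^ A.card
              * ((A.card.choose k : ℝ) * θ ^ k * (1 - θ) ^ (A.card - k)) := by rw [hβpow]
          _ = _ := by ring
      · rw [if_neg hcond, if_neg hcond]
        ring
    rw [Finset.sum_congr rfl hterm, ← Finset.mul_sum]
    have htail : (∑ k ∈ Finset.range (A.card + 1),
          if binomCDF A.card k θ ≤ δ then
            (A.card.choose k : ℝ) * θ ^ k * (1 - θ) ^ (A.card - k) else 0) ≤ δ := by
      rw [← Finset.sum_filter]
      exact binom_tail_le A.card ⟨hθ0, hθ1⟩ hδ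
    have hpos : (0:ℝ) ≤ (1 - β) ^ (m - A.card) * β ^ A.card := by positivity
    exact mul_le_mul_of_nonneg_left htail hpos
  refine le_trans (Finset.sum_le_sum (fun A _ => hinner A)) ?_
  have hps : (∑ A : Finset (Fin m), (1 - β) ^ (m - A.card) * β ^ A.card * δ)
      = ∑ A ∈ (Finset.univ : Finset (Fin m)).powerset,
          (1 - β) ^ (m - A.card) * β ^ A.card * δ := by
    rw [Finset.powerset_univ]
  rw [hps, Finset.sum_powerset_apply_card (fun k => (1 - β) ^ (m - k) * β ^ k * δ)]
  simp only [Finset.card_univ, Fintype.card_fin, nsmul_eq_mul]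
  have hbinom := add_pow β (1 - β) m
  norm_num at hbinom
  have hfin : (∑ k ∈ Finset.range (m + 1),
      (m.choose k : ℝ) * ((1 - β) ^ (m - k) * β ^ k * δ))
      = (∑ k ∈ Finset.range (m + 1), β ^ k * (1 - β) ^ (m - k) * (m.choose k : ℝ)) * δ := by
    rw [Finset.sum_mul]
    exact Finset.sum_congr rfl fun k _ => by ring
  rw [hfin, ← hbinom]
  norm_num

instance : IsProbabilityMeasure uniform01 :=
  ⟨by simp [uniform01, Real.volume_Icc]⟩

lemma uniform01_Iic {t : ℝ} (h0 : 0 ≤ t) (h1 : t ≤ 1) :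
    uniform01 {v : ℝ | v ≤ t} = ENNReal.ofReal t := by
  have hs : {v : ℝ | v ≤ t} = Set.Iic t := rfl
  rw [hs, uniform01, Measure.restrict_apply measurableSet_Iic]
  have hs2 : Set.Iic t ∩ Set.Icc 0 1 = Set.Icc 0 t := by
    ext v
    simp only [Set.mem_inter_iff, Set.mem_Iic, Set.mem_Icc]
    constructor
    · rintro ⟨a, b, _⟩; exact ⟨b, a⟩
    · rintro ⟨a, b⟩; exact ⟨b, a, le_trans b h1⟩
  rw [hs2, Real.volume_Icc]
  norm_num

end AuxLemmas

/-- **PAC prediction sets under covariate shift with approximate importance weights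
(Theorem 3).** `P` and `Q` satisfy covariate shift (shared conditional label kernel
`κ`), with importance weight `w*` bounded by `b`. The rectangular uncertainty set
`W(S^X, T^X) = {w : w̲_i ≤ w_i ≤ w̄_i}` (given by measurable bounds `wlo`, `whi`
depending on the source covariates and target covariates) contains the true weights
with probability at least `1 − δ_w`. With
`τ̂ = sup{τ ≥ 0 : max_{w ∈ W} U_RSCP(C_τ, S_m, V, w, b, δ_C) ≤ ε}` (`= 0` if
infeasible), any measurable selection rule `τ ≤ τ̂` satisfies
`Pr[L_Q(C_τ) ≤ ε] ≥ 1 − δ_C − δ_w` over `S_m ~ P^m`, `V ~ Uniform([0,1])^m`, and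
`T_n^X ~ Q_X^n`. -/

theorem pac_prediction_set_robust
    {X Y : Type*} [MeasurableSpace X] [MeasurableSpace Y]
    (P Q : Measure (X × Y)) [IsProbabilityMeasure P] [IsProbabilityMeasure Q]
    (κ : Kernel X Y) [IsMarkovKernel κ]
    (hP : P = (P.map Prod.fst) ⊗ₘ κ) (hQ : Q = (Q.map Prod.fst) ⊗ₘ κ)
    (wStar : X → ℝ) (hwmeas : Measurable wStar) (hw0 : ∀ x, 0 ≤ wStar x)
    (hdens : Q.map Prod.fst =
      (P.map Prod.fst).withDensity fun x => ENNReal.ofReal (wStar x))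
    (b : ℝ) (hb : 0 < b) (hwb : ∀ x, wStar x ≤ b)
    (f : X × Y → ℝ) (hf : Measurable f) (hf0 : ∀ p, 0 ≤ f p)
    (ε δC δw : ℝ) (hε : ε ∈ Set.Ioo (0 : ℝ) 1)
    (hδC : δC ∈ Set.Ioo (0 : ℝ) 1) (hδw : δw ∈ Set.Ioo (0 : ℝ) 1)
    (m n : ℕ) (hm : 1 ≤ m) (hn : 1 ≤ n)
    -- the rectangular uncertainty set `W(S_m^X, T_n^X)`, given by measurable bounds
    (wlo whi : (Fin m → X) → (Fin n → X) → Fin m → ℝ)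
    (hlomeas : Measurable fun p : (Fin m → X) × (Fin n → X) => wlo p.1 p.2)
    (hhimeas : Measurable fun p : (Fin m → X) × (Fin n → X) => whi p.1 p.2)
    -- the joint distribution of `(S_m, V, T_n^X)`
    (μ : Measure ((Fin m → X × Y) × (Fin m → ℝ) × (Fin n → X)))
    (hμ : μ = (Measure.pi fun _ : Fin m => P).prod
      ((Measure.pi fun _ : Fin m => uniform01).prod
        (Measure.pi fun _ : Fin n => Q.map Prod.fst)))
    -- `W` contains the true importance weights with probability at least `1 − δ_w`
    (hW : ENNReal.ofReal (1 - δw) ≤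
      μ {ω | ∀ i, wlo (fun j => (ω.1 j).1) ω.2.2 i ≤ wStar ((ω.1 i).1) ∧
        wStar ((ω.1 i).1) ≤ whi (fun j => (ω.1 j).1) ω.2.2 i})
    (τhat : (Fin m → X × Y) × (Fin m → ℝ) × (Fin n → X) → ℝ)
    (hτhat : τhat = fun ω =>
      sSup ({τ : ℝ | 0 ≤ τ ∧ ∀ w : Fin m → ℝ,
        (∀ i, wlo (fun j => (ω.1 j).1) ω.2.2 i ≤ w i ∧
          w i ≤ whi (fun j => (ω.1 j).1) ω.2.2 i) →
        URSCP (predSet f τ) ω.1 ω.2.1 w b δC ≤ ε} ∪ {0}))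
    (τsel : (Fin m → X × Y) × (Fin m → ℝ) × (Fin n → X) → ℝ)
    (hmeas : Measurable τsel) (hsel : ∀ ω, τsel ω ≤ τhat ω) :
    ENNReal.ofReal (1 - δC - δw) ≤
      μ {ω | predError Q (predSet f (τsel ω)) ≤ ε} := by
  classical
  subst hμ
  subst hτhat
  haveI hPXp : IsProbabilityMeasure (P.map Prod.fst) :=
    Measure.isProbabilityMeasure_map measurable_fst.aemeasurable
  haveI hQXp : IsProbabilityMeasure (Q.map Prod.fst) :=
    Measure.isProbabilityMeasure_map measurable_fst.aemeasurable
  obtain ⟨hε0, hε1⟩ := hε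
  obtain ⟨hδC0, hδC1⟩ := hδC
  obtain ⟨hδw0, hδw1⟩ := hδw
  set L : ℝ → ℝ := fun τ => (Q {p : X × Y | f p < τ}).toReal with hLdef
  have hLpred : ∀ τ, predError Q (predSet f τ) = L τ := by
    intro τ
    unfold predError predSet
    rw [show {p : X × Y | p.2 ∉ {y | τ ≤ f (p.1, y)}} = {p : X × Y | f p < τ} from by
      ext p; simp [not_le, Prod.mk.eta]]
  have hLmono : Monotone L := by
    intro τ1 τ2 h
    apply ENNReal.toReal_mono (measure_ne_top Q _)
    exact measure_mono (fun p hp => lt_of_lt_of_le hp h)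
  by_cases hUall : ∀ τ, L τ ≤ ε
  · have hall : {ω : (Fin m → X × Y) × (Fin m → ℝ) × (Fin n → X) |
        predError Q (predSet f (τsel ω)) ≤ ε} = Set.univ := by
      ext ω
      simp only [Set.mem_setOf_eq, Set.mem_univ, iff_true]
      rw [hLpred]
      exact hUall _
    rw [hall, measure_univ]
    exact ENNReal.ofReal_le_one.2 (by linarith)
  push_neg at hUall
  set U := {τ : ℝ | ε < L τ} with hUdef
  have hUne : U.Nonempty := hUall
  have hUpos : ∀ τ ∈ U, 0 < τ := by
    intro τ hτ
    by_contra hle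
    push_neg at hle
    have hempty : {p : X × Y | f p < τ} = ∅ := by
      ext p
      simp only [Set.mem_setOf_eq, Set.mem_empty_iff_false, iff_false, not_lt]
      exact le_trans hle (hf0 p)
    have : L τ = 0 := by rw [hLdef]; simp [hempty]
    rw [hUdef] at hτ
    simp only [Set.mem_setOf_eq, this] at hτ
    linarith
  set τstar := sInf U with hτstardef
  have hUbdd : BddBelow U := ⟨0, fun τ hτ => (hUpos τ hτ).le⟩
  have hτpos : 0 ≤ τstar := le_csInf hUne fun τ hτ => (hUpos τ hτ).le
  have hLτstar : L τstar ≤ ε := by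
    have hum : {p : X × Y | f p < τstar} = ⋃ j : ℕ, {p : X × Y | f p < τstar - 1/(j+1)} := by
      ext p
      simp only [Set.mem_setOf_eq, Set.mem_iUnion]
      constructor
      · intro h
        obtain ⟨j, hj⟩ := exists_nat_one_div_lt (show (0:ℝ) < τstar - f p by linarith)
        exact ⟨j, by push_cast at hj ⊢; linarith⟩
      · rintro ⟨j, hj⟩
        have hpos : (0:ℝ) < 1/((j:ℝ)+1) := by positivity
        linarith
    have hdir : Directed (· ⊆ ·) (fun j : ℕ => {p : X × Y | f p < τstar - 1/((j:ℝ)+1)}) := by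
      apply Monotone.directed_le
      intro j1 j2 hj p hp
      simp only [Set.mem_setOf_eq] at hp ⊢
      have hmono : 1/((j2:ℝ)+1) ≤ 1/((j1:ℝ)+1) := by
        apply one_div_le_one_div_of_le (by positivity)
        have : (j1:ℝ) ≤ (j2:ℝ) := by exact_mod_cast hj
        linarith
      linarith
    have hle : ∀ j : ℕ, Q {p : X × Y | f p < τstar - 1/((j:ℝ)+1)} ≤ ENNReal.ofReal ε := by
      intro j
      have hnotU : (τstar - 1/((j:ℝ)+1)) ∉ U := by
        intro hmem
        have := csInf_le hUbdd hmem
        have hpos : (0:ℝ) < 1/((j:ℝ)+1) := by positivity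
        rw [← hτstardef] at this
        linarith
      have hLle : L (τstar - 1/((j:ℝ)+1)) ≤ ε := by
        by_contra hcon
        push_neg at hcon
        exact hnotU hcon
      rw [← ENNReal.ofReal_toReal (measure_ne_top Q _)]
      exact ENNReal.ofReal_le_ofReal hLle
    have hQle : Q {p : X × Y | f p < τstar} ≤ ENNReal.ofReal ε := by
      rw [hum, hdir.measure_iUnion]
      exact iSup_le hle
    exact ENNReal.toReal_le_of_le_ofReal hε0.le hQle
  set θ' := (Q {p : X × Y | f p ≤ τstar}).toReal with hθ'def
  have hθ'0 : 0 ≤ θ' := ENNReal.toReal_nonneg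
  have hθ'1 : θ' ≤ 1 := by
    apply ENNReal.toReal_le_of_le_ofReal zero_le_one
    simpa using prob_le_one
  have hεθ' : ε ≤ θ' := by
    have him : {p : X × Y | f p ≤ τstar} = ⋂ j : ℕ, {p : X × Y | f p < τstar + 1/((j:ℝ)+1)} := by
      ext p
      simp only [Set.mem_setOf_eq, Set.mem_iInter]
      constructor
      · intro h j
        have hpos : (0:ℝ) < 1/((j:ℝ)+1) := by positivity
        linarith
      · intro h
        by_contra hcon
        push_neg at hcon
        obtain ⟨j, hj⟩ := exists_nat_one_div_lt (show (0:ℝ) < f p - τstar by linarith)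
        have := h j
        push_cast at hj
        linarith
    have hmeasj : ∀ j : ℕ, MeasurableSet {p : X × Y | f p < τstar + 1/((j:ℝ)+1)} :=
      fun j => hf measurableSet_Iio
    have hdir : Directed (· ⊇ ·) (fun j : ℕ => {p : X × Y | f p < τstar + 1/((j:ℝ)+1)}) := by
      apply Antitone.directed_ge
      intro j1 j2 hj p hp
      simp only [Set.mem_setOf_eq] at hp ⊢
      have hmono : 1/((j2:ℝ)+1) ≤ 1/((j1:ℝ)+1) := by
        apply one_div_le_one_div_of_le (by positivity)
        have : (j1:ℝ) ≤ (j2:ℝ) := by exact_mod_cast hj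
        linarith
      linarith
    have hiInter := Directed.measure_iInter (μ := Q)
      (fun j => (hmeasj j).nullMeasurableSet) hdir ⟨0, measure_ne_top Q _⟩
    have hge : ∀ j : ℕ, ENNReal.ofReal ε ≤ Q {p : X × Y | f p < τstar + 1/((j:ℝ)+1)} := by
      intro j
      have hmemU : (τstar + 1/((j:ℝ)+1)) ∈ U := by
        have hlt : τstar < τstar + 1/((j:ℝ)+1) := by
          have hpos : (0:ℝ) < 1/((j:ℝ)+1) := by positivity
          linarith
        obtain ⟨u, huU, hult⟩ := exists_lt_of_csInf_lt hUne (hτstardef ▸ hlt)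
        rw [hUdef] at huU ⊢
        simp only [Set.mem_setOf_eq] at huU ⊢
        exact lt_of_lt_of_le huU (hLmono hult.le)
      rw [hUdef] at hmemU
      simp only [Set.mem_setOf_eq] at hmemU
      exact ENNReal.ofReal_le_of_le_toReal hmemU.le
    have : ENNReal.ofReal ε ≤ Q {p : X × Y | f p ≤ τstar} := by
      rw [him, hiInter]
      exact le_iInf hge
    have h2 := ENNReal.toReal_mono (measure_ne_top Q _) this
    rwa [ENNReal.toReal_ofReal hε0.le] at h2
  have hb1 : (1:ℝ) ≤ b := by
    have h1 : (Q.map Prod.fst) Set.univ = 1 := measure_univ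
    rw [hdens, MeasureTheory.withDensity_apply _ MeasurableSet.univ,
      Measure.restrict_univ] at h1
    have h2 : ∫⁻ x, ENNReal.ofReal (wStar x) ∂(P.map Prod.fst) ≤ ENNReal.ofReal b := by
      calc ∫⁻ x, ENNReal.ofReal (wStar x) ∂(P.map Prod.fst)
          ≤ ∫⁻ _, ENNReal.ofReal b ∂(P.map Prod.fst) :=
            lintegral_mono fun x => ENNReal.ofReal_le_ofReal (hwb x)
        _ = ENNReal.ofReal b := by simp
    rw [h1] at h2
    exact ENNReal.one_le_ofReal.1 h2
  have hbinv0 : (0:ℝ) ≤ b⁻¹ := by positivity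
  have hbinv1 : b⁻¹ ≤ 1 := by
    rw [inv_le_one_iff₀]
    right; exact hb1
  -- the reference miss set
  set M := {p : X × Y | f p ≤ τstar} with hMdef
  have hM : MeasurableSet M := hf measurableSet_Iic
  have hQM : Q M = ENNReal.ofReal θ' := (ENNReal.ofReal_toReal (measure_ne_top Q M)).symm
  -- the category map
  set cat : (X × Y) × ℝ → Fin 3 := fun z =>
    if z.2 ≤ wStar z.1.1 / b then (if f z.1 ≤ τstar then 2 else 1) else 0 with hcatdef
  have hwdivmeas : Measurable fun z : (X × Y) × ℝ => wStar z.1.1 / b :=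
    (hwmeas.comp (measurable_fst.comp measurable_fst)).div_const b
  have hAccmeas : MeasurableSet {z : (X × Y) × ℝ | z.2 ≤ wStar z.1.1 / b} :=
    measurableSet_le measurable_snd hwdivmeas
  have hMzmeas : MeasurableSet {z : (X × Y) × ℝ | f z.1 ≤ τstar} :=
    (hf.comp measurable_fst) measurableSet_Iic
  have hcatmeas : Measurable cat :=
    Measurable.ite hAccmeas
      (Measurable.ite hMzmeas measurable_const measurable_const) measurable_const
  -- acceptance probability computation
  have haccQ : ∀ T : Set (X × Y), MeasurableSet T →
      (P.prod uniform01) {z : (X × Y) × ℝ | z.2 ≤ wStar z.1.1 / b ∧ z.1 ∈ T}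
        = ENNReal.ofReal b⁻¹ * Q T := by
    intro T hT
    have hsetm : MeasurableSet {z : (X × Y) × ℝ | z.2 ≤ wStar z.1.1 / b ∧ z.1 ∈ T} :=
      hAccmeas.inter (measurable_fst hT)
    rw [Measure.prod_apply hsetm]
    have hint : ∀ p : X × Y,
        uniform01 (Prod.mk p ⁻¹' {z : (X × Y) × ℝ | z.2 ≤ wStar z.1.1 / b ∧ z.1 ∈ T})
        = T.indicator (fun p : X × Y => ENNReal.ofReal (wStar p.1 / b)) p := by
      intro p
      by_cases hpT : p ∈ T
      · have hpre : Prod.mk p ⁻¹' {z : (X × Y) × ℝ | z.2 ≤ wStar z.1.1 / b ∧ z.1 ∈ T}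
            = {v : ℝ | v ≤ wStar p.1 / b} := by
          ext v
          simp [hpT]
        rw [hpre, Set.indicator_of_mem hpT]
        exact uniform01_Iic (div_nonneg (hw0 p.1) hb.le) ((div_le_one hb).2 (hwb p.1))
      · have hpre : Prod.mk p ⁻¹' {z : (X × Y) × ℝ | z.2 ≤ wStar z.1.1 / b ∧ z.1 ∈ T}
            = ∅ := by
          ext v
          simp [hpT]
        rw [hpre, Set.indicator_of_notMem hpT]
        simp
    rw [lintegral_congr hint]
    have hind2 : ∀ p : X × Y, T.indicator (fun p : X × Y => ENNReal.ofReal (wStar p.1 / b)) p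
        = ENNReal.ofReal b⁻¹ * T.indicator (fun p : X × Y => ENNReal.ofReal (wStar p.1)) p := by
      intro p
      by_cases hpT : p ∈ T
      · rw [Set.indicator_of_mem hpT, Set.indicator_of_mem hpT, div_eq_inv_mul,
          ENNReal.ofReal_mul hbinv0]
      · rw [Set.indicator_of_notMem hpT, Set.indicator_of_notMem hpT, mul_zero]
    rw [lintegral_congr hind2]
    have hg : Measurable fun p : X × Y =>
        T.indicator (fun p : X × Y => ENNReal.ofReal (wStar p.1)) p :=
      Measurable.indicator (by exact (hwmeas.comp measurable_fst).ennreal_ofReal) hT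
    rw [lintegral_const_mul _ hg]
    congr 1
    rw [hP, Measure.lintegral_compProd hg]
    have hinner : ∀ x : X, ∫⁻ y, T.indicator (fun p : X × Y => ENNReal.ofReal (wStar p.1)) (x, y) ∂(κ x)
        = ENNReal.ofReal (wStar x) * κ x (Prod.mk x ⁻¹' T) := by
      intro x
      have heq : (fun y => T.indicator (fun p : X × Y => ENNReal.ofReal (wStar p.1)) (x, y))
          = fun y => (Prod.mk x ⁻¹' T).indicator (fun _ => ENNReal.ofReal (wStar x)) y := by
        funext y
        by_cases hxy : (x, y) ∈ T
        · rw [Set.indicator_of_mem hxy, Set.indicator_of_mem (by exact hxy)]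
        · rw [Set.indicator_of_notMem hxy, Set.indicator_of_notMem (by exact hxy)]
      rw [heq, lintegral_indicator (measurable_prodMk_left hT), setLIntegral_const]
    rw [lintegral_congr hinner]
    have hwd : ∫⁻ x, ENNReal.ofReal (wStar x) * κ x (Prod.mk x ⁻¹' T) ∂(P.map Prod.fst)
        = ∫⁻ x, κ x (Prod.mk x ⁻¹' T) ∂(Q.map Prod.fst) := by
      rw [hdens, lintegral_withDensity_eq_lintegral_mul _ hwmeas.ennreal_ofReal
        (Kernel.measurable_kernel_prodMk_left hT)]
      rfl
    rw [hwd]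
    conv_rhs => rw [hQ]
    rw [Measure.compProd_apply hT]
  -- coordinate pattern map
  set Φ : ((Fin m → X × Y) × (Fin m → ℝ) × (Fin n → X)) → (Fin m → Fin 3) :=
    fun ω i => cat (ω.1 i, ω.2.1 i) with hΦdef
  have hpat : ∀ c : Fin m → Fin 3,
      ((Measure.pi fun _ : Fin m => P).prod
        ((Measure.pi fun _ : Fin m => uniform01).prod
          (Measure.pi fun _ : Fin n => Q.map Prod.fst))) (Φ ⁻¹' {c})
      = ∏ i : Fin m, (P.prod uniform01) (cat ⁻¹' {c i}) := by
    intro c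
    have hEm : ∀ j : Fin 3, MeasurableSet (cat ⁻¹' {j}) :=
      fun j => hcatmeas (measurableSet_singleton j)
    set D := {sv : (Fin m → X × Y) × (Fin m → ℝ) | ∀ i, (sv.1 i, sv.2 i) ∈ cat ⁻¹' {c i}}
      with hDdef
    have hDm : MeasurableSet D := by
      have hD2 : D = ⋂ i, (fun sv : (Fin m → X × Y) × (Fin m → ℝ) =>
          (sv.1 i, sv.2 i)) ⁻¹' (cat ⁻¹' {c i}) := by
        ext sv
        simp only [hDdef, Set.mem_setOf_eq, Set.mem_iInter, Set.mem_preimage]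
      rw [hD2]
      exact MeasurableSet.iInter fun i =>
        (((measurable_pi_apply i).comp measurable_fst).prodMk
          ((measurable_pi_apply i).comp measurable_snd)) (hEm (c i))
    have hpre12 : Φ ⁻¹' {c}
        = (fun ω : (Fin m → X × Y) × (Fin m → ℝ) × (Fin n → X) => (ω.1, ω.2.1)) ⁻¹' D := by
      ext ω
      simp only [Set.mem_preimage, Set.mem_singleton_iff, hDdef, Set.mem_setOf_eq,
        funext_iff, hΦdef]
    rw [hpre12]
    have hmeas12 : Measurable fun ω : (Fin m → X × Y) × (Fin m → ℝ) × (Fin n → X) =>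
        (ω.1, ω.2.1) := measurable_fst.prodMk (measurable_fst.comp measurable_snd)
    rw [Measure.prod_apply (hmeas12 hDm)]
    have hsec : ∀ S : Fin m → X × Y,
        ((Measure.pi fun _ : Fin m => uniform01).prod
          (Measure.pi fun _ : Fin n => Q.map Prod.fst))
          (Prod.mk S ⁻¹' ((fun ω : (Fin m → X × Y) × (Fin m → ℝ) × (Fin n → X) =>
            (ω.1, ω.2.1)) ⁻¹' D))
        = (Measure.pi fun _ : Fin m => uniform01) {V : Fin m → ℝ | (S, V) ∈ D} := by
      intro S
      have hps : Prod.mk S ⁻¹' ((fun ω : (Fin m → X × Y) × (Fin m → ℝ) × (Fin n → X) =>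
            (ω.1, ω.2.1)) ⁻¹' D)
          = {V : Fin m → ℝ | (S, V) ∈ D} ×ˢ (Set.univ : Set (Fin n → X)) := by
        ext vt
        simp only [Set.mem_preimage, Set.mem_prod, Set.mem_setOf_eq, Set.mem_univ, and_true]
      rw [hps, Measure.prod_prod, measure_univ, mul_one]
    rw [lintegral_congr hsec]
    have hAB : ((Measure.pi fun _ : Fin m => P).prod (Measure.pi fun _ : Fin m => uniform01)) D
        = ∫⁻ S, (Measure.pi fun _ : Fin m => uniform01) {V : Fin m → ℝ | (S, V) ∈ D}
            ∂(Measure.pi fun _ : Fin m => P) := by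
      rw [Measure.prod_apply hDm]
      rfl
    rw [← hAB]
    have hmp := measurePreserving_arrowProdEquivProdArrow (X × Y) ℝ (Fin m)
      (fun _ => P) (fun _ => uniform01)
    rw [← hmp.map_eq, Measure.map_apply hmp.measurable hDm]
    have hpre : (MeasurableEquiv.arrowProdEquivProdArrow (X × Y) ℝ (Fin m)) ⁻¹' D
        = Set.pi Set.univ (fun i => cat ⁻¹' {c i}) := by
      ext W
      simp only [Set.mem_preimage, MeasurableEquiv.arrowProdEquivProdArrow,
        Equiv.arrowProdEquivProdArrow, MeasurableEquiv.coe_mk, Equiv.coe_fn_mk,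
        hDdef, Set.mem_setOf_eq, Set.mem_pi, Set.mem_univ, forall_true_left, true_implies]
    rw [hpre, Measure.pi_pi]
  -- values of the single-coordinate measures
  have hE2 : (P.prod uniform01) (cat ⁻¹' {2}) = ENNReal.ofReal (b⁻¹ * θ') := by
    have hset : cat ⁻¹' {2} = {z : (X × Y) × ℝ | z.2 ≤ wStar z.1.1 / b ∧ z.1 ∈ M} := by
      ext z
      simp only [Set.mem_preimage, Set.mem_singleton_iff, hcatdef, hMdef, Set.mem_setOf_eq]
      by_cases h1 : z.2 ≤ wStar z.1.1 / b <;> by_cases h2 : f z.1 ≤ τstar <;>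
        simp [h1, h2]
    rw [hset, haccQ M hM, hQM, ← ENNReal.ofReal_mul hbinv0]
  have hQMc : Q Mᶜ = ENNReal.ofReal (1 - θ') := by
    rw [measure_compl hM (measure_ne_top Q M), measure_univ, hQM,
      ENNReal.ofReal_sub _ hθ'0, ENNReal.ofReal_one]
  have hE1 : (P.prod uniform01) (cat ⁻¹' {1}) = ENNReal.ofReal (b⁻¹ * (1 - θ')) := by
    have hset : cat ⁻¹' {1} = {z : (X × Y) × ℝ | z.2 ≤ wStar z.1.1 / b ∧ z.1 ∈ Mᶜ} := by
      ext z
      simp only [Set.mem_preimage, Set.mem_singleton_iff, hcatdef, hMdef,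
        Set.mem_setOf_eq, Set.mem_compl_iff]
      by_cases h1 : z.2 ≤ wStar z.1.1 / b <;> by_cases h2 : f z.1 ≤ τstar <;>
        simp [h1, h2]
    rw [hset, haccQ Mᶜ hM.compl, hQMc, ← ENNReal.ofReal_mul hbinv0]
  have hE0 : (P.prod uniform01) (cat ⁻¹' {0}) = ENNReal.ofReal (1 - b⁻¹) := by
    have hAccQ : (P.prod uniform01) {z : (X × Y) × ℝ | z.2 ≤ wStar z.1.1 / b ∧ z.1 ∈ (Set.univ : Set (X × Y))}
        = ENNReal.ofReal b⁻¹ := by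
      rw [haccQ Set.univ MeasurableSet.univ, measure_univ, mul_one]
    have hseteq : {z : (X × Y) × ℝ | z.2 ≤ wStar z.1.1 / b ∧ z.1 ∈ (Set.univ : Set (X × Y))}
        = {z : (X × Y) × ℝ | z.2 ≤ wStar z.1.1 / b} := by
      ext z; simp
    have hset : cat ⁻¹' {0} = {z : (X × Y) × ℝ | z.2 ≤ wStar z.1.1 / b}ᶜ := by
      ext z
      simp only [Set.mem_preimage, Set.mem_singleton_iff, hcatdef,
        Set.mem_compl_iff, Set.mem_setOf_eq]
      by_cases h1 : z.2 ≤ wStar z.1.1 / b <;> by_cases h2 : f z.1 ≤ τstar <;>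
        simp [h1, h2]
    rw [hset, measure_compl hAccmeas (measure_ne_top _ _), measure_univ,
      ← hseteq, hAccQ, ENNReal.ofReal_sub _ hbinv0, ENNReal.ofReal_one]
  -- the bad event
  set badF : Finset (Fin m → Fin 3) := Finset.univ.filter
    (fun c => binomCDF (Finset.univ.filter fun i => c i ≠ 0).card
      ((Finset.univ.filter fun i => c i = 2).card) θ' ≤ δC) with hbadFdef
  set Bad := ⋃ c ∈ badF, Φ ⁻¹' {c} with hBaddef
  have hΦmeasset : ∀ c : Fin m → Fin 3, MeasurableSet (Φ ⁻¹' {c}) := by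
    intro c
    have : Φ ⁻¹' {c} = ⋂ i, (fun ω : (Fin m → X × Y) × (Fin m → ℝ) × (Fin n → X) =>
        cat (ω.1 i, ω.2.1 i)) ⁻¹' {c i} := by
      ext ω
      simp only [Set.mem_preimage, Set.mem_singleton_iff, Set.mem_iInter, hΦdef, funext_iff]
    rw [this]
    refine MeasurableSet.iInter fun i => ?_
    exact (hcatmeas.comp (((measurable_pi_apply i).comp measurable_fst).prodMk
      ((measurable_pi_apply i).comp (measurable_fst.comp measurable_snd))))
      (measurableSet_singleton (c i))
  have hμBad : ((Measure.pi fun _ : Fin m => P).prod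
      ((Measure.pi fun _ : Fin m => uniform01).prod
        (Measure.pi fun _ : Fin n => Q.map Prod.fst))) Bad ≤ ENNReal.ofReal δC := by
    have hdisj : (↑badF : Set (Fin m → Fin 3)).PairwiseDisjoint (fun c => Φ ⁻¹' {c}) := by
      intro c1 h1 c2 h2 hne
      apply Set.disjoint_left.2
      intro ω hω1 hω2
      simp only [Set.mem_preimage, Set.mem_singleton_iff] at hω1 hω2
      exact hne (hω1 ▸ hω2 ▸ rfl)
    rw [hBaddef, measure_biUnion_finset hdisj (fun c _ => hΦmeasset c)]
    set q : Fin 3 → ℝ := ![1 - b⁻¹, b⁻¹ * (1 - θ'), b⁻¹ * θ'] with hqdef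
    have hqnn : ∀ j : Fin 3, 0 ≤ q j := by
      intro j
      fin_cases j
      · show (0:ℝ) ≤ 1 - b⁻¹
        linarith
      · show (0:ℝ) ≤ b⁻¹ * (1 - θ')
        nlinarith
      · show (0:ℝ) ≤ b⁻¹ * θ'
        nlinarith
    have hpE : ∀ j : Fin 3, (P.prod uniform01) (cat ⁻¹' {j}) = ENNReal.ofReal (q j) := by
      intro j
      fin_cases j
      · exact hE0
      · exact hE1
      · exact hE2
    have hpatq : ∀ c : Fin m → Fin 3,
        ((Measure.pi fun _ : Fin m => P).prod
          ((Measure.pi fun _ : Fin m => uniform01).prod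
            (Measure.pi fun _ : Fin n => Q.map Prod.fst))) (Φ ⁻¹' {c})
        = ENNReal.ofReal (∏ i, q (c i)) := by
      intro c
      rw [hpat c, ENNReal.ofReal_prod_of_nonneg (fun i _ => hqnn (c i))]
      exact Finset.prod_congr rfl fun i _ => hpE (c i)
    rw [Finset.sum_congr rfl (fun c _ => hpatq c),
      ← ENNReal.ofReal_sum_of_nonneg
        (fun c _ => Finset.prod_nonneg (fun i _ => hqnn (c i)))]
    apply ENNReal.ofReal_le_ofReal
    have hrw : ∀ c ∈ badF, ∏ i, q (c i)
        = ((1 - b⁻¹) ^ (m - (Finset.univ.filter fun i => c i ≠ 0).card)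
          * ((b⁻¹ * (1 - θ')) ^ ((Finset.univ.filter fun i => c i ≠ 0).card
              - (Finset.univ.filter fun i => c i = 2).card)
            * (b⁻¹ * θ') ^ (Finset.univ.filter fun i => c i = 2).card)) := by
      intro c _
      rw [pattern_prod q c]
      rfl
    rw [Finset.sum_congr rfl hrw, hbadFdef]
    exact key_comb m b⁻¹ θ' δC hbinv0 hbinv1 hθ'0 hθ'1 hδC0.le
  -- the weight event
  set Agood := {ω : (Fin m → X × Y) × (Fin m → ℝ) × (Fin n → X) |
    ∀ i, wlo (fun j => (ω.1 j).1) ω.2.2 i ≤ wStar ((ω.1 i).1) ∧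
      wStar ((ω.1 i).1) ≤ whi (fun j => (ω.1 j).1) ω.2.2 i} with hAgooddef
  -- the key pointwise implication
  have hsubset : Agood ∩ Badᶜ ⊆ {ω : (Fin m → X × Y) × (Fin m → ℝ) × (Fin n → X) |
      predError Q (predSet f (τsel ω)) ≤ ε} := by
    rintro ω ⟨hωA, hωB⟩
    simp only [hAgooddef, Set.mem_setOf_eq] at hωA
    simp only [Set.mem_setOf_eq]
    rw [hLpred]
    by_contra hc
    push_neg at hc
    have hτselU : τsel ω ∈ U := hc
    have hτs : τstar < τsel ω := by
      by_contra hle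
      push_neg at hle
      have hmle := hLmono hle
      rw [hUdef] at hτselU
      simp only [Set.mem_setOf_eq] at hτselU
      linarith [hLτstar]
    have hsel' := hsel ω
    beta_reduce at hsel'
    by_cases hbdd : BddAbove ({τ : ℝ | 0 ≤ τ ∧ ∀ w : Fin m → ℝ,
        (∀ i, wlo (fun j => (ω.1 j).1) ω.2.2 i ≤ w i ∧
          w i ≤ whi (fun j => (ω.1 j).1) ω.2.2 i) →
        URSCP (predSet f τ) ω.1 ω.2.1 w b δC ≤ ε} ∪ {0})
    swap
    · rw [Real.sSup_of_not_bddAbove hbdd] at hsel'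
      linarith
    have hne2 : ({τ : ℝ | 0 ≤ τ ∧ ∀ w : Fin m → ℝ,
        (∀ i, wlo (fun j => (ω.1 j).1) ω.2.2 i ≤ w i ∧
          w i ≤ whi (fun j => (ω.1 j).1) ω.2.2 i) →
        URSCP (predSet f τ) ω.1 ω.2.1 w b δC ≤ ε} ∪ {0} : Set ℝ).Nonempty :=
      ⟨0, Set.mem_union_right _ rfl⟩
    obtain ⟨τ, hτmem, hττ⟩ := exists_lt_of_lt_csSup hne2 (lt_of_lt_of_le hτs hsel')
    rcases hτmem with hτSS | hτ0
    swap
    · rw [Set.mem_singleton_iff] at hτ0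
      rw [hτ0] at hττ
      linarith
    obtain ⟨hτ0', hfeas⟩ := hτSS
    have hwin := hfeas (fun i => wStar ((ω.1 i).1)) (fun i => ⟨(hωA i).1, (hωA i).2⟩)
    unfold URSCP at hwin
    simp only at hwin
    -- the comparison of miss counts
    have hcard : (Finset.univ.filter fun i : Fin m =>
          ω.2.1 i ≤ wStar ((ω.1 i).1) / b ∧ f (ω.1 i) ≤ τstar).card
        ≤ (Finset.univ.filter fun i : Fin m =>
          ω.2.1 i ≤ wStar ((ω.1 i).1) / b ∧ (ω.1 i).2 ∉ predSet f τ (ω.1 i).1).card := by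
      apply Finset.card_le_card
      apply Finset.monotone_filter_right
      intro i _ hi
      refine ⟨hi.1, ?_⟩
      intro hmem
      have : τ ≤ f ((ω.1 i).1, (ω.1 i).2) := hmem
      rw [Prod.mk.eta] at this
      have := hi.2
      linarith
    have hchain : cpUpper (Finset.univ.filter fun i : Fin m =>
          ω.2.1 i ≤ wStar ((ω.1 i).1) / b ∧ f (ω.1 i) ≤ τstar).card
        ((Finset.univ.filter fun i : Fin m => ω.2.1 i ≤ wStar ((ω.1 i).1) / b).card) δC ≤ ε :=
      le_trans (cpUpper_mono _ hcard δC) hwin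
    have hlt1 : cpUpper (Finset.univ.filter fun i : Fin m =>
          ω.2.1 i ≤ wStar ((ω.1 i).1) / b ∧ f (ω.1 i) ≤ τstar).card
        ((Finset.univ.filter fun i : Fin m => ω.2.1 i ≤ wStar ((ω.1 i).1) / b).card) δC < 1 :=
      lt_of_le_of_lt hchain hε1
    have hFcp := cpUpper_spec _ _ δC hlt1
    have hanti := binomCDF_antitoneOn
      ((Finset.univ.filter fun i : Fin m => ω.2.1 i ≤ wStar ((ω.1 i).1) / b).card)
      ((Finset.univ.filter fun i : Fin m =>
          ω.2.1 i ≤ wStar ((ω.1 i).1) / b ∧ f (ω.1 i) ≤ τstar).card)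
      (Set.mem_Icc.2 ⟨cpUpper_nonneg _ _ _, cpUpper_le_one _ _ _⟩)
      (Set.mem_Icc.2 ⟨le_trans hε0.le hεθ', hθ'1⟩)
      (le_trans hchain hεθ')
    have hFθ' : binomCDF
        ((Finset.univ.filter fun i : Fin m => ω.2.1 i ≤ wStar ((ω.1 i).1) / b).card)
        ((Finset.univ.filter fun i : Fin m =>
          ω.2.1 i ≤ wStar ((ω.1 i).1) / b ∧ f (ω.1 i) ≤ τstar).card) θ' ≤ δC :=
      le_trans hanti hFcp
    -- hence ω ∈ Bad, contradiction
    apply hωB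
    rw [hBaddef]
    apply Set.mem_iUnion₂.2
    refine ⟨Φ ω, ?_, rfl⟩
    rw [hbadFdef, Finset.mem_filter]
    refine ⟨Finset.mem_univ _, ?_⟩
    have hfN : (Finset.univ.filter fun i => Φ ω i ≠ 0)
        = (Finset.univ.filter fun i : Fin m => ω.2.1 i ≤ wStar ((ω.1 i).1) / b) := by
      apply Finset.filter_congr
      intro i _
      simp only [hΦdef, hcatdef]
      by_cases h1 : ω.2.1 i ≤ wStar ((ω.1 i).1) / b <;>
        by_cases h2 : f (ω.1 i) ≤ τstar <;> simp [h1, h2]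
    have hfK : (Finset.univ.filter fun i => Φ ω i = 2)
        = (Finset.univ.filter fun i : Fin m =>
            ω.2.1 i ≤ wStar ((ω.1 i).1) / b ∧ f (ω.1 i) ≤ τstar) := by
      apply Finset.filter_congr
      intro i _
      simp only [hΦdef, hcatdef]
      by_cases h1 : ω.2.1 i ≤ wStar ((ω.1 i).1) / b <;>
        by_cases h2 : f (ω.1 i) ≤ τstar <;> simp [h1, h2]
    rw [hfN, hfK]
    exact hFθ'
  -- final assembly
  have hBadm : MeasurableSet Bad := by
    rw [hBaddef]
    exact (badF : Finset (Fin m → Fin 3)).measurableSet_biUnion (fun c _ => hΦmeasset c)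
  have h1 : ((Measure.pi fun _ : Fin m => P).prod
      ((Measure.pi fun _ : Fin m => uniform01).prod
        (Measure.pi fun _ : Fin n => Q.map Prod.fst))) Agood
      ≤ ((Measure.pi fun _ : Fin m => P).prod
      ((Measure.pi fun _ : Fin m => uniform01).prod
        (Measure.pi fun _ : Fin n => Q.map Prod.fst))) (Agood ∩ Badᶜ) + ENNReal.ofReal δC := by
    calc _ ≤ ((Measure.pi fun _ : Fin m => P).prod
        ((Measure.pi fun _ : Fin m => uniform01).prod
          (Measure.pi fun _ : Fin n => Q.map Prod.fst))) ((Agood ∩ Badᶜ) ∪ Bad) :=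
          measure_mono (fun ω h => by
            by_cases hB : ω ∈ Bad
            · exact Or.inr hB
            · exact Or.inl ⟨h, hB⟩)
      _ ≤ _ := le_trans (measure_union_le _ _) (add_le_add_right hμBad _)
  have h2 : ENNReal.ofReal (1 - δC - δw) ≤ ((Measure.pi fun _ : Fin m => P).prod
      ((Measure.pi fun _ : Fin m => uniform01).prod
        (Measure.pi fun _ : Fin n => Q.map Prod.fst))) (Agood ∩ Badᶜ) := by
    rw [show (1 - δC - δw : ℝ) = (1 - δw) - δC from by ring,
      ENNReal.ofReal_sub _ hδC0.le]
    exact tsub_le_iff_right.2 (le_trans hW h1)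
  exact le_trans h2 (measure_mono hsubset)
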